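/- Let ω be a radial weight on the unit disc with all moments positive, and define ω̃(u) = 2 ∫_{|u|}^1 ω(r) r dr. Then the Bergman reproducing kernels satisfy (∂/∂u) B_ζ^ω(u) = conj(ζ) · B_ζ^{ω̃}(u) for all u, ζ ∈ D. -/

import Mathlib

/-!
Inside the disc the kernel's power series `∑ (u ζ̄)ⁿ / (2 ω_{2n+1})` may be differentiated
term by term, which multiplies the coefficient of `uⁿ` in the derivative by `n + 1`. Fubini on
the triangle `0 < r < s < 1` gives `ω̃_{2n+1} = ω_{2n+3} / (n + 1)`, so that factor is exactly
absorbed by the moments of `ω̃`.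
-/

open Metric Set MeasureTheory intervalIntegral

/-- The moment `ω_x = ∫_0^1 r^x ω(r) dr` of a radial weight. -/
noncomputable def moment (ω : ℝ → ℝ) (x : ℝ) : ℝ := ∫ r in (0 : ℝ)..1, r ^ x * ω r

/-- The Bergman reproducing kernel of `A²_ω`, as a power series in `u conj(ζ)`. -/
noncomputable def bergmanKernel (ω : ℝ → ℝ) (ζ u : ℂ) : ℂ :=
  ∑' n : ℕ, (u * (starRingEnd ℂ) ζ) ^ n / (2 * (moment ω (2 * n + 1) : ℂ))

/-- The associated weight `ω̃(r) = 2 ∫_r^1 ω(s) s ds`. -/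
noncomputable def tildeWeight (ω : ℝ → ℝ) (r : ℝ) : ℝ := 2 * ∫ s in r..1, ω s * s

theorem intervalIntegral.integral_mul_integral_swap_triangle {a b : ℝ} {f g : ℝ → ℝ}
    (hab : a ≤ b) (hf : IntervalIntegrable f volume a b) (hg : IntervalIntegrable g volume a b) :
    ∫ r in a..b, g r * ∫ s in r..b, f s = ∫ s in a..b, (∫ r in a..s, g r) * f s := by
  rw [intervalIntegrable_iff_integrableOn_Ioc_of_le hab] at hf hg
  set F : ℝ × ℝ → ℝ := {p | p.1 < p.2}.indicator fun p => g p.1 * f p.2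
  have hF : Integrable F ((volume.restrict (Ioc a b)).prod (volume.restrict (Ioc a b))) :=
    (hg.mul_prod hf).indicator (measurableSet_lt measurable_fst measurable_snd)
  have inner_snd : ∀ r ∈ Ioc a b, ∫ s in Ioc a b, F (r, s) = g r * ∫ s in r..b, f s := by
    intro r hr
    have hFr : ∀ s, F (r, s) = (Ioi r).indicator (fun s => g r * f s) s := fun _ => rfl
    rw [setIntegral_congr_fun measurableSet_Ioc fun s _ => hFr s,
      setIntegral_indicator measurableSet_Ioi, Ioc_inter_Ioi, sup_eq_right.2 hr.1.le,
      MeasureTheory.integral_const_mul, integral_of_le hr.2]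
  have inner_fst : ∀ s ∈ Ioc a b, ∫ r in Ioc a b, F (r, s) = (∫ r in a..s, g r) * f s := by
    intro s hs
    have hFs : ∀ r, F (r, s) = (Iio s).indicator (fun r => g r * f s) r := fun _ => rfl
    have hset : Ioc a b ∩ Iio s = Ioo a s :=
      ext fun _ => ⟨fun h => ⟨h.1.1, h.2⟩, fun h => ⟨⟨h.1, h.2.le.trans hs.2⟩, h.2⟩⟩
    rw [setIntegral_congr_fun measurableSet_Ioc fun r _ => hFs r,
      setIntegral_indicator measurableSet_Iio, hset, MeasureTheory.integral_mul_const,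
      integral_of_le hs.1.le, integral_Ioc_eq_integral_Ioo]
  rw [integral_of_le hab, integral_of_le hab,
    ← setIntegral_congr_fun measurableSet_Ioc inner_snd,
    ← setIntegral_congr_fun measurableSet_Ioc inner_fst,
    integral_integral_swap (f := fun r s => F (r, s)) hF]

theorem moment_tildeWeight {ω : ℝ → ℝ} (hω : IntervalIntegrable ω volume 0 1) {x : ℝ}
    (hx : -1 < x) : moment (tildeWeight ω) x = 2 * moment ω (x + 2) / (x + 1) := by
  have hx1 : x + 1 ≠ 0 := by linarith
  calc moment (tildeWeight ω) x = 2 * ∫ r in 0..1, r ^ x * ∫ s in r..1, ω s * s := by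
        simp only [moment, tildeWeight, mul_left_comm _ (2 : ℝ),
          intervalIntegral.integral_const_mul]
    _ = 2 * ∫ s in 0..1, (∫ r in 0..s, r ^ x) * (ω s * s) := by
        rw [integral_mul_integral_swap_triangle zero_le_one
          (hω.mul_continuousOn (continuousOn_id' _)) (intervalIntegrable_rpow' hx)]
    _ = 2 * ∫ s in 0..1, s ^ (x + 2) * ω s / (x + 1) := by
        refine congrArg _ (integral_congr fun s hs => ?_)
        have hs0 : 0 ≤ s := by simpa using hs.1
        rw [integral_rpow (Or.inl hx), Real.zero_rpow hx1, sub_zero,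
          show x + 2 = x + 1 + 1 by ring, Real.rpow_add_one' (y := x + 1) hs0 (by linarith)]
        ring
    _ = 2 * moment ω (x + 2) / (x + 1) := by
        rw [intervalIntegral.integral_div, moment]
        ring

theorem norm_mul_pow_le_geometric {c : ℕ → ℂ} {ρ R C : ℝ} (hR : 0 ≤ R) (hRρ : R < ρ)
    (hC : ∀ n, ‖c n * (ρ : ℂ) ^ n‖ ≤ C) (n : ℕ) {w : ℂ} (hw : ‖w‖ ≤ R) :
    ‖c n * w ^ n‖ ≤ C * (R / ρ) ^ n := by
  have hρ : 0 < ρ := hR.trans_lt hRρ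
  have hCn : ‖c n‖ * ρ ^ n ≤ C := by
    simpa [norm_mul, norm_pow, Complex.norm_real, abs_of_pos hρ] using hC n
  calc ‖c n * w ^ n‖ ≤ ‖c n‖ * R ^ n := by
        rw [norm_mul, norm_pow]; gcongr
    _ = ‖c n‖ * ρ ^ n * (R / ρ) ^ n := by
        rw [div_pow, mul_assoc, mul_div_cancel₀ _ (pow_ne_zero n hρ.ne')]
    _ ≤ C * (R / ρ) ^ n := by gcongr

theorem deriv_tsum_mul_pow {c : ℕ → ℂ} {r : ℝ}
    (hc : ∀ w ∈ ball (0 : ℂ) r, Summable fun n => c n * w ^ n) {u : ℂ}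
    (hu : u ∈ ball (0 : ℂ) r) :
    deriv (fun w => ∑' n, c n * w ^ n) u = ∑' n, (n + 1) * c (n + 1) * u ^ n := by
  obtain ⟨R, huR, hRr⟩ := exists_between (mem_ball_zero_iff.1 hu)
  obtain ⟨ρ, hRρ, hρr⟩ := exists_between hRr
  have hR : 0 ≤ R := (norm_nonneg u).trans huR.le
  have hρ : 0 < ρ := hR.trans_lt hRρ
  obtain ⟨C, hC⟩ :=
    (hc ρ (by simpa [abs_of_pos hρ] using hρr)).tendsto_atTop_zero.norm.bddAbove_range
  have hbound : ∀ n, ∀ w ∈ ball (0 : ℂ) R, ‖c n * w ^ n‖ ≤ C * (R / ρ) ^ n := fun n w hw =>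
    norm_mul_pow_le_geometric hR hRρ (fun k => hC (mem_range_self k)) n
      (mem_ball_zero_iff.1 hw).le
  have hsum := Complex.hasSum_deriv_of_summable_norm
    ((summable_geometric_of_lt_one (div_nonneg hR hρ.le) ((div_lt_one hρ).2 hRρ)).mul_left C)
    (fun n => ((differentiable_pow n).const_mul (c n)).differentiableOn) isOpen_ball hbound
    (mem_ball_zero_iff.2 huR)
  simp only [deriv_const_mul_field', deriv_pow_field] at hsum
  have hshift := (hasSum_nat_add_iff' 1).2 hsum
  simp only [Finset.range_one, Finset.sum_singleton, Nat.cast_zero, zero_mul, mul_zero, sub_zero,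
    add_tsub_cancel_right, Nat.cast_add, Nat.cast_one] at hshift
  rw [← hshift.tsum_eq]
  exact tsum_congr fun n => by ring

theorem bergmanKernel_coeff_mul_pow (ω : ℝ → ℝ) (ζ u : ℂ) (n : ℕ) :
    (u * (starRingEnd ℂ) ζ) ^ n / (2 * (moment ω (2 * n + 1) : ℂ)) =
      (starRingEnd ℂ) ζ ^ n / (2 * (moment ω (2 * n + 1) : ℂ)) * u ^ n := by
  ring

theorem bergmanKernel_eq_tsum (ω : ℝ → ℝ) (ζ : ℂ) : bergmanKernel ω ζ =
    fun u => ∑' n : ℕ, (starRingEnd ℂ) ζ ^ n / (2 * (moment ω (2 * n + 1) : ℂ)) * u ^ n :=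
  funext fun u => tsum_congr (bergmanKernel_coeff_mul_pow ω ζ u)

theorem stmt8_general (ω : ℝ → ℝ)
    (hint : IntegrableOn ω (Set.Ioo (0 : ℝ) 1))
    (hSum : ∀ ζ ∈ ball (0 : ℂ) 1, ∀ u ∈ ball (0 : ℂ) 1,
      Summable (fun n : ℕ =>
        (u * (starRingEnd ℂ) ζ) ^ n / (2 * (moment ω (2 * n + 1) : ℂ)))) :
    ∀ ζ ∈ ball (0 : ℂ) 1, ∀ u ∈ ball (0 : ℂ) 1,
      deriv (fun w => bergmanKernel ω ζ w) u =
        (starRingEnd ℂ) ζ * bergmanKernel (tildeWeight ω) ζ u := by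
  intro ζ hζ u hu
  have hω : IntervalIntegrable ω volume 0 1 :=
    (intervalIntegrable_iff_integrableOn_Ioo_of_le zero_le_one).2 hint
  have hseries : ∀ w ∈ ball (0 : ℂ) 1, Summable fun n : ℕ =>
      (starRingEnd ℂ) ζ ^ n / (2 * (moment ω (2 * n + 1) : ℂ)) * w ^ n := fun w hw =>
    (hSum ζ hζ w hw).congr (bergmanKernel_coeff_mul_pow ω ζ w)
  rw [bergmanKernel_eq_tsum ω, deriv_tsum_mul_pow hseries hu, bergmanKernel, ← tsum_mul_left]
  refine tsum_congr fun n => ?_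
  rw [moment_tildeWeight hω (by linarith [n.cast_nonneg (α := ℝ)])]
  push_cast
  simp only [div_eq_mul_inv, mul_inv, inv_inv]
  ring_nf

theorem stmt8 (ω : ℝ → ℝ)
    (hmeas : Measurable ω)
    (hpos : ∀ r ∈ Set.Ioo (0 : ℝ) 1, 0 ≤ ω r)
    (hint : IntegrableOn ω (Set.Ioo (0 : ℝ) 1))
    (hmom : ∀ x : ℝ, 1 ≤ x → 0 < moment ω x)
    (hSum : ∀ ζ ∈ ball (0 : ℂ) 1, ∀ u ∈ ball (0 : ℂ) 1,
      Summable (fun n : ℕ =>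
        (u * (starRingEnd ℂ) ζ) ^ n / (2 * (moment ω (2 * n + 1) : ℂ))))
    (hSumT : ∀ ζ ∈ ball (0 : ℂ) 1, ∀ u ∈ ball (0 : ℂ) 1,
      Summable (fun n : ℕ =>
        (u * (starRingEnd ℂ) ζ) ^ n / (2 * (moment (tildeWeight ω) (2 * n + 1) : ℂ)))) :
    ∀ ζ ∈ ball (0 : ℂ) 1, ∀ u ∈ ball (0 : ℂ) 1,
      deriv (fun w => bergmanKernel ω ζ w) u =
        (starRingEnd ℂ) ζ * bergmanKernel (tildeWeight ω) ζ u :=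
  stmt8_general ω hint hSum
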